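/- Let {C_k}_{k=1}^K be a partition of {1,...,p} into nonempty communities and {D_h}_{h=1}^H a partition into nonempty demographic groups. Let Q be the partition matrix with q_{ij} = 1/|C_k| iff i,j ∈ C_k (else 0), and let R ∈ {0,1}^{p×p} have r_{ij} = 1 iff i and j are in the same demographic group. Then R(I - 𝟙𝟙^⊤/p)Q = 0 if and only if |D_h ∩ C_k|/|C_k| = |D_h|/p for all h ∈ [H] and k ∈ [K]. -/
import Mathlib


/-- Matrix characterization of demographic parity: with `Q` the partition matrix of the
communities (assignment `f`) and `R` the group-membership matrix of the demographic groups
(assignment `g`), `R (I - 𝟙𝟙ᵀ/p) Q = 0` iff every community contains each demographic group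
in its global proportion. -/
theorem stmt_2 (p K H : ℕ) (hp : 0 < p)
    (f : Fin p → Fin K) (hf : Function.Surjective f)
    (g : Fin p → Fin H) (hg : Function.Surjective g)
    (Q R : Matrix (Fin p) (Fin p) ℝ)
    (hQ : ∀ i j, Q i j =
      if f i = f j then (1 : ℝ) / ((Finset.univ.filter (fun l => f l = f i)).card) else 0)
    (hR : ∀ i j, R i j = if g i = g j then 1 else 0) :
    R * ((1 : Matrix (Fin p) (Fin p) ℝ) - Matrix.of (fun _ _ => (1 : ℝ) / p)) * Q = 0 ↔
    ∀ (h : Fin H) (k : Fin K),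
      ((Finset.univ.filter (fun i => g i = h ∧ f i = k)).card : ℝ) /
        ((Finset.univ.filter (fun i => f i = k)).card) =
      ((Finset.univ.filter (fun i => g i = h)).card : ℝ) / p := by
  have hcard : ∀ j : Fin p, (0:ℝ) < ((Finset.univ.filter (fun l => f l = f j)).card : ℝ) := by
    intro j
    have : j ∈ Finset.univ.filter (fun l => f l = f j) := by simp
    exact_mod_cast Finset.card_pos.mpr ⟨j, this⟩
  have key : ∀ i j : Fin p,
      ((R * ((1 : Matrix (Fin p) (Fin p) ℝ) - Matrix.of (fun _ _ => (1:ℝ)/p)) * Q)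
        : Matrix (Fin p) (Fin p) ℝ) i j =
      ((Finset.univ.filter (fun l => g l = g i ∧ f l = f j)).card : ℝ) /
        ((Finset.univ.filter (fun l => f l = f j)).card) -
      ((Finset.univ.filter (fun l => g l = g i)).card : ℝ) / p := by
    intro i j
    rw [Matrix.mul_sub, Matrix.mul_one, Matrix.sub_mul, Matrix.sub_apply]
    congr 1
    · -- (R*Q) i j
      rw [Matrix.mul_apply]
      have h1 : ∀ l, R i l * Q l j =
          if g l = g i ∧ f l = f j then
            (1:ℝ) / ((Finset.univ.filter (fun l => f l = f j)).card) else 0 := by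
        intro l
        rw [hR, hQ]
        by_cases h1 : g l = g i <;> by_cases h2 : f l = f j <;>
          simp [h1, h2, eq_comm (a := g i)]
      simp only [h1]
      rw [← Finset.sum_filter, Finset.sum_const, nsmul_eq_mul, mul_one_div]
    · -- (R*J*Q) i j
      rw [Matrix.mul_apply]
      have h2 : ∀ m, ((R * Matrix.of (fun _ _ => (1:ℝ)/p) : Matrix (Fin p) (Fin p) ℝ)) i m =
          ((Finset.univ.filter (fun l => g l = g i)).card : ℝ) / p := by
        intro m
        rw [Matrix.mul_apply]
        have : ∀ l, R i l * (Matrix.of (fun _ _ => (1:ℝ)/p)) l m =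
            if g l = g i then (1:ℝ)/p else 0 := by
          intro l
          rw [hR]
          by_cases h1 : g l = g i <;> simp [h1, eq_comm (a := g i)]
        simp only [this]
        rw [← Finset.sum_filter, Finset.sum_const, nsmul_eq_mul, mul_one_div]
      simp only [h2]
      have h3 : ∀ m, Q m j =
          if f m = f j then (1:ℝ) / ((Finset.univ.filter (fun l => f l = f j)).card) else 0 := by
        intro m
        rw [hQ]
        by_cases h1 : f m = f j <;> simp [h1]
      rw [← Finset.mul_sum]
      simp only [h3]
      rw [← Finset.sum_filter, Finset.sum_const, nsmul_eq_mul, mul_one_div,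
        div_self (ne_of_gt (hcard j)), mul_one]
  constructor
  · intro hM h k
    obtain ⟨i, hi⟩ := hg h
    obtain ⟨j, hj⟩ := hf k
    have := key i j
    rw [hM, Matrix.zero_apply] at this
    rw [← hi, ← hj]
    have := sub_eq_zero.mp this.symm
    exact this.symm ▸ this
  · intro hdp
    ext i j
    rw [key i j, Matrix.zero_apply, sub_eq_zero]
    exact hdp (g i) (f j)
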